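/- arXiv:2312.01613 — 4 statements merged into one kernel-verified Lean document; each statement's English description precedes it below -/
import Mathlib

section
/- Let G be a finite simple graph with girth at least 5. If S is a subset of the vertices such that the complement graph of G with S removed is disconnected, then the induced subgraph of the complement on V(G) \ S has exactly two connected components. -/
/-- If `G` has girth at least 5 and `S` is a set of vertices such that the complement
of `G` with `S` removed is disconnected, then the induced subgraph of the complement
on the remaining vertices has exactly two connected components. -/
theorem stmt3 {V : Type*} [Fintype V] (G : SimpleGraph V) (h : 5 ≤ G.egirth)
    (S : Set V) (hdisc : ¬ (Gᶜ.induce Sᶜ).Preconnected) :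
    Nat.card (Gᶜ.induce Sᶜ).ConnectedComponent = 2 := by
  classical
  set H := Gᶜ.induce Sᶜ with hH
  rw [SimpleGraph.Preconnected] at hdisc
  push_neg at hdisc
  obtain ⟨u, v, huv⟩ := hdisc
  -- key: any two vertices in different components are adjacent in G
  have key : ∀ a b : ↥Sᶜ, ¬ H.Reachable a b → G.Adj a b := by
    intro a b hab
    have hne : (a : V) ≠ (b : V) := by
      rintro he
      exact hab (by rw [Subtype.ext he])
    have hnadj : ¬ H.Adj a b := fun hadj => hab hadj.reachable
    have hthis : ¬ Gᶜ.Adj a b := by simpa [hH] using hnadj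
    rw [SimpleGraph.compl_adj, not_and_or, not_not, not_not] at hthis
    exact hthis.resolve_left hne
  -- no three pairwise-unreachable vertices (else triangle in G)
  have tri : ∀ a b c : ↥Sᶜ, ¬ H.Reachable a b → ¬ H.Reachable b c →
      ¬ H.Reachable a c → False := by
    intro a b c hab hbc hac
    have h1 : G.Adj a b := key a b hab
    have h2 : G.Adj b c := key b c hbc
    have h3 : G.Adj (c : V) a := (key a c hac).symm
    have ne1 : (a : V) ≠ b := h1.ne
    have ne2 : (b : V) ≠ c := h2.ne
    have ne3 : (c : V) ≠ a := h3.ne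
    -- build a 3-cycle
    let w : G.Walk (a : V) (a : V) :=
      SimpleGraph.Walk.cons h1 (SimpleGraph.Walk.cons h2 (SimpleGraph.Walk.cons h3 .nil))
    have hw : w.IsCycle := by
      rw [SimpleGraph.Walk.cons_isCycle_iff]
      constructor
      · rw [SimpleGraph.Walk.isPath_def]
        simp only [SimpleGraph.Walk.support_cons, SimpleGraph.Walk.support_nil]
        simp [List.nodup_cons, ne1.symm, ne2, ne3, ne3.symm]
      · intro h'
        simp [Sym2.eq_iff, ne1, ne2, ne3, ne1.symm, ne2.symm, ne3.symm] at h'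
    have hle := SimpleGraph.le_egirth.mp h _ w hw
    have hlen : w.length = 3 := by simp [w]
    rw [hlen] at hle
    norm_num at hle
  have hcard : ∀ c : H.ConnectedComponent,
      c = H.connectedComponentMk u ∨ c = H.connectedComponentMk v := by
    intro c
    induction c using SimpleGraph.ConnectedComponent.ind with
    | _ w =>
      by_contra hc
      push_neg at hc
      obtain ⟨h1, h2⟩ := hc
      exact tri w u v (fun r => h1 (SimpleGraph.ConnectedComponent.sound r)) huv
        (fun r => h2 (SimpleGraph.ConnectedComponent.sound r))
  rw [Nat.card_eq_two_iff]
  refine ⟨H.connectedComponentMk u, H.connectedComponentMk v, ?_, ?_⟩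
  · exact fun he => huv (SimpleGraph.ConnectedComponent.exact he)
  · ext c
    simp only [Set.mem_insert_iff, Set.mem_singleton_iff, Set.mem_univ, iff_true]
    exact hcard c
end

section
/- Let G be a finite simple graph with girth at least 5, and let S ⊆ V(G) be such that the complement of G with S removed is disconnected. Then at least one connected component of (complement of G) \ S is a single isolated vertex. -/
/-- If `G` has girth at least 5 and `S` is a set of vertices such that the complement
of `G` with `S` removed is disconnected, then some connected component of the
induced subgraph of the complement on the remaining vertices is a single isolated vertex. -/
theorem stmt4 {V : Type*} [Fintype V] (G : SimpleGraph V) (h : 5 ≤ G.egirth)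
    (S : Set V) (hdisc : ¬ (Gᶜ.induce Sᶜ).Preconnected) :
    ∃ v : ↥Sᶜ, ∀ w : ↥Sᶜ, (Gᶜ.induce Sᶜ).Reachable v w → w = v := by
  by_contra hcon
  push_neg at hcon
  -- every vertex has a neighbor in the induced complement
  have hnbr : ∀ u : ↥Sᶜ, ∃ u' : ↥Sᶜ, (Gᶜ.induce Sᶜ).Adj u u' ∧ (Gᶜ.induce Sᶜ).Reachable u u' := by
    intro u
    obtain ⟨u', hr, hne⟩ := hcon u
    obtain ⟨p⟩ := hr
    have hnil : ¬ p.Nil := SimpleGraph.Walk.not_nil_of_ne (fun e => hne e.symm)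
    exact ⟨p.getVert 1, p.adj_snd hnil, (p.adj_snd hnil).reachable⟩
  simp only [SimpleGraph.Preconnected] at hdisc
  push_neg at hdisc
  obtain ⟨v, w, hvw⟩ := hdisc
  obtain ⟨v', hvv', hrvv'⟩ := hnbr v
  obtain ⟨w', hww', hrww'⟩ := hnbr w
  -- cross pairs are edges of G
  have cross : ∀ a b : ↥Sᶜ, ¬ (Gᶜ.induce Sᶜ).Reachable a b → G.Adj a.val b.val := by
    intro a b hab
    have hne : (a : V) ≠ b := fun e => hab (by rw [Subtype.ext e])
    have hnadj : ¬ (Gᶜ.induce Sᶜ).Adj a b := fun hadj => hab hadj.reachable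
    have : ¬ (Gᶜ).Adj a.val b.val := by simpa using hnadj
    rw [SimpleGraph.compl_adj] at this
    push_neg at this
    exact this hne
  have hvw' : ¬ (Gᶜ.induce Sᶜ).Reachable v w' := fun hr => hvw (hr.trans hrww'.symm)
  have hv'w : ¬ (Gᶜ.induce Sᶜ).Reachable v' w := fun hr => hvw (hrvv'.trans hr)
  have hv'w' : ¬ (Gᶜ.induce Sᶜ).Reachable v' w' :=
    fun hr => hvw (hrvv'.trans (hr.trans hrww'.symm))
  have e1 : G.Adj v.val w.val := cross v w hvw
  have e2 : G.Adj w.val v'.val := (cross v' w hv'w).symm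
  have e3 : G.Adj v'.val w'.val := cross v' w' hv'w'
  have e4 : G.Adj w'.val v.val := (cross v w' hvw').symm
  -- distinctness
  have d1 : (v : V) ≠ w := e1.ne
  have d2 : (v : V) ≠ v' := Subtype.coe_ne_coe.mpr (by simpa using hvv'.ne)
  have d3 : (v : V) ≠ w' := e4.ne.symm
  have d4 : (w : V) ≠ v' := e2.ne
  have d5 : (w : V) ≠ w' := Subtype.coe_ne_coe.mpr (by simpa using hww'.ne)
  have d6 : (v' : V) ≠ w' := e3.ne
  -- build the 4-cycle v - w - v' - w' - v
  let c : G.Walk v.val v.val :=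
    .cons e1 (.cons e2 (.cons e3 (.cons e4 .nil)))
  have hc : c.IsCycle := by
    rw [SimpleGraph.Walk.isCycle_def]
    refine ⟨⟨?_⟩, by simp [c], ?_⟩
    · simp only [c, SimpleGraph.Walk.edges_cons, SimpleGraph.Walk.edges_nil]
      simp [List.nodup_cons, Sym2.eq, Sym2.rel_iff', d1, d2, d3, d4, d5, d6,
        d1.symm, d2.symm, d3.symm, d4.symm, d5.symm, d6.symm]
    · simp only [c, SimpleGraph.Walk.support_cons, SimpleGraph.Walk.support_nil, List.tail_cons]
      simp [List.nodup_cons, d1, d2, d3, d4, d5, d6,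
        d1.symm, d2.symm, d3.symm, d4.symm, d5.symm, d6.symm]
  have := SimpleGraph.le_egirth.mp h v.val c hc
  simp only [c] at this
  norm_num [SimpleGraph.Walk.length_cons] at this
end

section
/- Let G be a finite simple graph with girth at least 5 and no universal vertex, on n ≥ 4 vertices, with at least one edge. Call an edge {v,w} of G a free edge if {v,w} forms its own connected component of G (both v and w have degree 1 and are adjacent to each other). Let H be the subgraph of G obtained by removing all vertices of degree ≤ 1. Then the collection of 'cut sets' of the complement graph of G — that is, the sets S ⊆ V(G) such that S = ∅ or for every v ∈ S, removing S \ {v} from the complement of G yields strictly fewer connected components than removing S — is exactly: {∅} ∪ { N_{complement of G}(v) : v ∈ V(H) } ∪ { V(G) \ {v,w} : {v,w} a free edge of G }. -/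
open SimpleGraph

/-- An edge `{v,w}` of `G` is a free edge if it forms its own connected component,
i.e. `v` and `w` are adjacent and each has the other as its unique neighbour. -/
def IsFreeEdge {V : Type*} (G : SimpleGraph V) (v w : V) : Prop :=
  G.Adj v w ∧ G.neighborSet v = {w} ∧ G.neighborSet w = {v}

/-- The number of connected components of `Γ` with the vertex set `S` removed. -/
noncomputable def numComponentsDel {V : Type*} (Γ : SimpleGraph V) (S : Set V) : ℕ :=
  Nat.card (Γ.induce Sᶜ).ConnectedComponent

/-!
Write `T = Sᶜ` for the kept vertices. Since `G` has no `4`-cycle, if `Gᶜ[T]` is disconnected then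
one side of the split is a single vertex `v` that is `G`-adjacent to all of `T`; since `G` is
triangle-free, `T \ {v} ⊆ N(v)` is then a clique of `Gᶜ`, so `Gᶜ[T]` has exactly two components.
Hence a nonempty `S` is a cut set exactly when `Sᶜ` is the closed neighbourhood of a non-isolated
vertex `v` and no `u ∈ S` has `N(v) ⊆ N(u)`: for such a `u` some vertex is still `G`-adjacent to
all of `T ∪ {u}`, and for any other `u` the graph `Gᶜ[T ∪ {u}]` is connected. As two vertices
have at most one common neighbour, the last condition is automatic when `deg v ≥ 2`, and when
`N(v) = {w}` it says `N(w) = {v}`.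
-/

namespace SimpleGraph

variable {V : Type*} {G : SimpleGraph V}

lemma cliqueFree_three_of_four_le_egirth (hG : 4 ≤ G.egirth) : G.CliqueFree 3 := by
  classical
  intro s hs
  obtain ⟨a, b, c, hab, hac, hbc, rfl⟩ := is3Clique_iff.mp hs
  have hcyc : (Walk.cons hab (Walk.cons hbc (Walk.cons hac.symm Walk.nil))).IsCycle := by
    simp [Walk.cons_isCycle_iff, hab.ne, hbc.ne, hac.ne, hab.ne', hac.ne']
  exact absurd (le_egirth.mp hG a _ hcyc) (by norm_num)

lemma subsingleton_commonNeighbors_of_five_le_egirth (hG : 5 ≤ G.egirth) {a c : V}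
    (hac : a ≠ c) : (G.commonNeighbors a c).Subsingleton := by
  intro b hb d hd
  rw [mem_commonNeighbors] at hb hd
  by_contra hbd
  have hcyc : (Walk.cons hb.1 (Walk.cons hb.2.symm (Walk.cons hd.2
      (Walk.cons hd.1.symm Walk.nil)))).IsCycle := by
    simp [Walk.cons_isCycle_iff, hb.1.ne, hb.1.ne', hb.2.ne', hd.1.ne, hd.1.ne', hd.2.ne, hac,
      hac.symm, hbd]
  exact absurd (le_egirth.mp hG a _ hcyc) (by norm_num)

lemma compl_neighborSet_compl (G : SimpleGraph V) (v : V) :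
    (Gᶜ.neighborSet v)ᶜ = insert v (G.neighborSet v) := by
  rw [neighborSet_compl, Set.compl_sdiff, compl_compl, Set.singleton_union]

lemma exists_forall_adj_of_not_preconnected_compl (hG : 5 ≤ G.egirth)
    (h : ¬ Gᶜ.Preconnected) : ∃ v, ∀ w, w ≠ v → G.Adj v w := by
  obtain ⟨x, y, hxy⟩ : ∃ x y, ¬ Gᶜ.Reachable x y := by simpa [Preconnected] using h
  have hcross : ∀ z z', Gᶜ.Reachable x z → ¬ Gᶜ.Reachable x z' → G.Adj z z' := by
    intro z z' hz hz'
    by_contra hzz'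
    have hne : z ≠ z' := by rintro rfl; exact hz' hz
    exact hz' (hz.trans (compl_adj G z z' |>.mpr ⟨hne, hzz'⟩).reachable)
  by_cases hx : ∀ z, Gᶜ.Reachable x z → z = x
  · exact ⟨x, fun w hw => hcross x w .rfl fun hxw => hw (hx w hxw)⟩
  push Not at hx
  obtain ⟨z, hxz, hzx⟩ := hx
  refine ⟨y, fun w hwy => ?_⟩
  by_cases hxw : Gᶜ.Reachable x w
  · exact (hcross w y hxw hxy).symm
  -- `y` and `w` are both common neighbours of `x ≠ z`
  exact absurd (subsingleton_commonNeighbors_of_five_le_egirth hG hzx.symm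
    ⟨hcross x y .rfl hxy, hcross z y hxz hxy⟩ ⟨hcross x w .rfl hxw, hcross z w hxz hxw⟩) hwy.symm

lemma two_le_degree_iff {v : V} [Fintype (G.neighborSet v)] :
    2 ≤ G.degree v ↔ (G.neighborSet v).Nontrivial := by
  rw [← card_neighborFinset_eq_degree, ← coe_neighborFinset]
  exact Finset.one_lt_card_iff_nontrivial

lemma not_neighborSet_subset_of_nontrivial (hG : 5 ≤ G.egirth) {u v : V} (huv : u ≠ v)
    (hv : (G.neighborSet v).Nontrivial) : ¬ G.neighborSet v ⊆ G.neighborSet u := fun hsub =>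
  hv.not_subsingleton <|
    (subsingleton_commonNeighbors_of_five_le_egirth hG huv.symm).anti fun _ hx => ⟨hx, hsub hx⟩

lemma compl_induce (G : SimpleGraph V) (T : Set V) : (G.induce T)ᶜ = Gᶜ.induce T := by
  ext x y
  simp [Subtype.ext_iff]

lemma exists_subset_insert_neighborSet_of_not_preconnected (hG : 5 ≤ G.egirth) {T : Set V}
    (h : ¬ (Gᶜ.induce T).Preconnected) : ∃ v ∈ T, T ⊆ insert v (G.neighborSet v) := by
  have hGT : 5 ≤ (G.induce T).egirth := hG.trans (Embedding.induce T).isContained.egirth_le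
  rw [← compl_induce] at h
  obtain ⟨v, hv⟩ := exists_forall_adj_of_not_preconnected_compl hGT h
  refine ⟨v, v.2, fun w hw => ?_⟩
  by_cases hwv : w = v
  · exact .inl hwv
  · exact .inr (hv ⟨w, hw⟩ fun h => hwv (congrArg Subtype.val h))

lemma card_connectedComponent_eq_one (h : G.Connected) : Nat.card G.ConnectedComponent = 1 := by
  have := h.preconnected.subsingleton_connectedComponent
  have := h.nonempty
  exact Nat.card_unique (α := G.ConnectedComponent)

lemma card_connectedComponent_induce_eq_two {T : Set V} {v b : V} (hv : v ∈ T) (hb : b ∈ T)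
    (hbv : b ≠ v) (hiso : ∀ w ∈ T, ¬ G.Adj v w) (hT : G.IsClique (T \ {v})) :
    Nat.card (G.induce T).ConnectedComponent = 2 := by
  rw [Nat.card_eq_two_iff]
  refine ⟨connectedComponentMk _ ⟨v, hv⟩, connectedComponentMk _ ⟨b, hb⟩, ?_, ?_⟩
  · rw [Ne, ConnectedComponent.eq]
    rintro ⟨p⟩
    have hp := p.adj_snd (p.not_nil_of_ne fun h => hbv (congrArg Subtype.val h).symm)
    exact hiso _ p.snd.2 hp
  refine Set.eq_univ_of_forall fun c => c.ind fun ⟨z, hz⟩ => ?_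
  by_cases hzv : z = v
  · subst hzv; exact .inl rfl
  by_cases hzb : z = b
  · subst hzb; exact .inr rfl
  refine .inr (ConnectedComponent.sound (Adj.reachable ?_))
  exact hT ⟨hz, hzv⟩ ⟨hb, hbv⟩ hzb

lemma card_connectedComponent_compl_induce_eq_two (hG : G.CliqueFree 3) {T : Set V} {v b : V}
    (hv : v ∈ T) (hb : b ∈ T) (hbv : b ≠ v) (hT : T ⊆ insert v (G.neighborSet v)) :
    Nat.card (Gᶜ.induce T).ConnectedComponent = 2 := by
  have hTv : T \ {v} ⊆ G.neighborSet v := fun w ⟨hw, hwv⟩ => (hT hw).resolve_left hwv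
  refine card_connectedComponent_induce_eq_two hv hb hbv (fun w hw hvw => ?_) ?_
  · obtain ⟨hvw, hnadj⟩ := (compl_adj G v w).mp hvw
    exact hnadj ((hT hw).resolve_left hvw.symm)
  · exact G.isClique_compl.mpr
      (Set.Pairwise.mono hTv (G.isIndepSet_neighborSet_of_triangleFree hG v))

lemma connected_compl_induce_insert_insert_neighborSet (hG : G.CliqueFree 3) {u v b : V}
    (huv : u ≠ v) (hvu : ¬ G.Adj v u) (hvb : G.Adj v b) (hub : ¬ G.Adj u b) :
    (Gᶜ.induce (insert u (insert v (G.neighborSet v)))).Connected := by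
  have hN : (Gᶜ.induce (G.neighborSet v)).Preconnected := by
    rw [induce_eq_top.mpr (G.isClique_compl.mpr (G.isIndepSet_neighborSet_of_triangleFree hG v))]
    exact preconnected_top
  have hub' : Gᶜ.Adj u b := (compl_adj G u b).mpr ⟨fun h => hvu (h ▸ hvb), hub⟩
  have := connected_induce_union (induce_pair_connected_of_adj ((compl_adj G u v).mpr
    ⟨huv, fun h => hvu h.symm⟩)).preconnected hN (Set.mem_insert u {v}) hvb hub'
  rwa [Set.insert_union, Set.singleton_union] at this

end SimpleGraph

section CutSets

variable {V : Type*} {G : SimpleGraph V} {S : Set V}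

lemma numComponentsDel_sdiff_singleton (Γ : SimpleGraph V) (S : Set V) (u : V) :
    numComponentsDel Γ (S \ {u}) = Nat.card (Γ.induce (insert u Sᶜ)).ConnectedComponent := by
  rw [numComponentsDel, Set.compl_sdiff, Set.singleton_union]

lemma one_le_numComponentsDel_sdiff_singleton [Finite V] (Γ : SimpleGraph V) (S : Set V) (u : V) :
    1 ≤ numComponentsDel Γ (S \ {u}) := by
  rw [numComponentsDel_sdiff_singleton]
  have : Nonempty (Γ.induce (insert u Sᶜ)).ConnectedComponent :=
    ⟨connectedComponentMk _ ⟨u, Set.mem_insert u _⟩⟩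
  exact Nat.card_pos

lemma numComponentsDel_sdiff_singleton_lt (hG : G.CliqueFree 3) {v b u : V} (hvb : G.Adj v b)
    (hS : Sᶜ = insert v (G.neighborSet v)) (hu : u ∈ S)
    (hsub : ¬ G.neighborSet v ⊆ G.neighborSet u) :
    numComponentsDel Gᶜ (S \ {u}) < numComponentsDel Gᶜ S := by
  obtain ⟨b', hvb', hub'⟩ := Set.not_subset.mp hsub
  have huS : u ∉ insert v (G.neighborSet v) := hS ▸ Set.notMem_compl_iff.mpr hu
  rw [numComponentsDel_sdiff_singleton, numComponentsDel, hS,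
    card_connectedComponent_eq_one (connected_compl_induce_insert_insert_neighborSet hG
      (fun h => huS (.inl h)) (fun h => huS (.inr h)) hvb' hub'),
    card_connectedComponent_compl_induce_eq_two (T := insert v (G.neighborSet v)) hG
      (Set.mem_insert v _) (Set.mem_insert_of_mem v hvb) hvb.ne' subset_rfl]
  norm_num

lemma exists_compl_eq_insert_neighborSet_of_forall_numComponentsDel_sdiff_lt [Finite V]
    (hG : 5 ≤ G.egirth) (hS : S.Nonempty)
    (hcut : ∀ u ∈ S, numComponentsDel Gᶜ (S \ {u}) < numComponentsDel Gᶜ S) :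
    ∃ v, (G.neighborSet v).Nonempty ∧ Sᶜ = insert v (G.neighborSet v) ∧
      ∀ u ∈ S, ¬ G.neighborSet v ⊆ G.neighborSet u := by
  have hG3 := cliqueFree_three_of_four_le_egirth (le_trans (by norm_num) hG)
  obtain ⟨u₀, hu₀⟩ := hS
  have hdisc : ¬ (Gᶜ.induce Sᶜ).Preconnected := fun h => by
    have h₁ : numComponentsDel Gᶜ S ≤ 1 :=
      Finite.card_le_one_iff_subsingleton.mpr h.subsingleton_connectedComponent
    have h₂ := (one_le_numComponentsDel_sdiff_singleton Gᶜ S u₀).trans_lt (hcut u₀ hu₀)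
    omega
  obtain ⟨v, hv, hT⟩ := exists_subset_insert_neighborSet_of_not_preconnected hG hdisc
  obtain ⟨b, hb, hbv⟩ : ∃ b ∈ Sᶜ, b ≠ v := by
    by_contra! h
    exact hdisc fun x y => (Subtype.ext ((h x x.2).trans (h y y.2).symm) : x = y) ▸ .rfl
  have hc : numComponentsDel Gᶜ S = 2 :=
    card_connectedComponent_compl_induce_eq_two hG3 hv hb hbv hT
  have hkeep : ∀ u ∈ S, ∀ w ∈ insert u Sᶜ, u ≠ w →
      ¬ insert u Sᶜ ⊆ insert w (G.neighborSet w) := by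
    intro u hu w hw huw hsub
    have := hcut u hu
    rw [numComponentsDel_sdiff_singleton, hc,
      card_connectedComponent_compl_induce_eq_two hG3 hw (Set.mem_insert u _) huw hsub] at this
    exact lt_irrefl _ this
  have huv : ∀ u ∈ S, u ≠ v := fun u hu h => hv (h ▸ hu)
  have hN : G.neighborSet v ⊆ Sᶜ := fun u hvu hu =>
    hkeep u hu v (Set.mem_insert_of_mem _ hv) (huv u hu) (Set.insert_subset (.inr hvu) hT)
  have hSc : Sᶜ = insert v (G.neighborSet v) := hT.antisymm (Set.insert_subset hv hN)
  refine ⟨v, ⟨b, (hT hb).resolve_left hbv⟩, hSc, fun u hu hsub => ?_⟩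
  -- `N(v)` consists of common neighbours of `v ≠ u`, so it is a single vertex `w`,
  -- and `w` dominates `{u, v, w}`.
  obtain ⟨w, hw⟩ : ∃ w, G.neighborSet v = {w} := by
    refine (Set.Nonempty.exists_eq_singleton_or_nontrivial ⟨b, (hT hb).resolve_left hbv⟩)
      |>.resolve_right fun hnt => not_neighborSet_subset_of_nontrivial hG (huv u hu) hnt hsub
  have hvw : G.Adj v w := (hw ▸ Set.mem_singleton w : w ∈ G.neighborSet v)
  have huw : G.Adj u w := hsub hvw
  rw [hSc, hw] at hkeep
  refine hkeep u hu w (by simp) huw.ne ?_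
  simp [Set.insert_subset_iff, huw.symm, hvw.symm]

theorem forall_numComponentsDel_sdiff_lt_iff [Finite V] (hG : 5 ≤ G.egirth) (hS : S.Nonempty) :
    (∀ u ∈ S, numComponentsDel Gᶜ (S \ {u}) < numComponentsDel Gᶜ S) ↔
      ∃ v, (G.neighborSet v).Nonempty ∧ Sᶜ = insert v (G.neighborSet v) ∧
        ∀ u ∈ S, ¬ G.neighborSet v ⊆ G.neighborSet u :=
  ⟨exists_compl_eq_insert_neighborSet_of_forall_numComponentsDel_sdiff_lt hG hS,
    fun ⟨_, ⟨_, hvb⟩, hSc, hsub⟩ u hu => numComponentsDel_sdiff_singleton_lt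
      (cliqueFree_three_of_four_le_egirth (le_trans (by norm_num) hG)) hvb hSc hu (hsub u hu)⟩

lemma exists_compl_eq_insert_neighborSet_iff [Fintype V] [DecidableRel G.Adj]
    (hG : 5 ≤ G.egirth) :
    (∃ v, (G.neighborSet v).Nonempty ∧ Sᶜ = insert v (G.neighborSet v) ∧
        ∀ u ∈ S, ¬ G.neighborSet v ⊆ G.neighborSet u) ↔
      (∃ v, 2 ≤ G.degree v ∧ S = Gᶜ.neighborSet v) ∨
        ∃ v w, IsFreeEdge G v w ∧ S = ({v, w} : Set V)ᶜ := by
  constructor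
  · rintro ⟨v, hne, hS, hsub⟩
    rcases hne.exists_eq_singleton_or_nontrivial with ⟨w, hw⟩ | hnt
    · have hvw : G.Adj v w := (hw ▸ Set.mem_singleton w : w ∈ G.neighborSet v)
      refine .inr ⟨v, w, ⟨hvw, hw, Set.eq_singleton_iff_unique_mem.mpr ⟨hvw.symm, ?_⟩⟩, ?_⟩
      · intro u hwu
        by_contra huv
        have huS : u ∈ S := Set.notMem_compl_iff.mp fun hu => by
          rw [hS, hw] at hu
          exact hu.elim huv (G.ne_of_adj hwu).symm
        exact hsub u huS (hw ▸ Set.singleton_subset_iff.mpr hwu.symm)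
      · rw [← compl_compl S, hS, hw]
    · exact .inl ⟨v, two_le_degree_iff.mpr hnt,
        compl_injective (hS.trans (compl_neighborSet_compl G v).symm)⟩
  · rintro (⟨v, hdeg, rfl⟩ | ⟨v, w, ⟨hvw, hv, hw⟩, rfl⟩)
    · refine ⟨v, (two_le_degree_iff.mp hdeg).nonempty, compl_neighborSet_compl G v, ?_⟩
      exact fun u hu => not_neighborSet_subset_of_nontrivial hG ((compl_adj G v u).mp hu).1.symm
        (two_le_degree_iff.mp hdeg)
    · refine ⟨v, hv ▸ Set.singleton_nonempty w, by rw [compl_compl, hv], fun u hu hsub => ?_⟩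
      have hwu : u ∈ G.neighborSet w := G.adj_symm (hsub (hv ▸ Set.mem_singleton w))
      exact hu (.inl (hw ▸ hwu : u ∈ ({v} : Set V)))

end CutSets

theorem stmt5_general {V : Type*} [Fintype V] (G : SimpleGraph V)
    [DecidableRel G.Adj]
    (hgirth : 5 ≤ G.egirth) :
    {S : Set V | S = ∅ ∨ ∀ v ∈ S,
        numComponentsDel Gᶜ (S \ {v}) < numComponentsDel Gᶜ S}
      = {S : Set V | S = ∅
          ∨ (∃ v : V, 2 ≤ G.degree v ∧ S = Gᶜ.neighborSet v)
          ∨ (∃ v w : V, IsFreeEdge G v w ∧ S = ({v, w} : Set V)ᶜ)} := by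
  ext S
  refine or_congr_right' fun hS => ?_
  rw [forall_numComponentsDel_sdiff_lt_iff hgirth (Set.nonempty_iff_ne_empty.mpr hS),
    exists_compl_eq_insert_neighborSet_iff hgirth]

/-- The cut sets of the complement of a graph `G` of girth at least 5, with at least
four vertices, at least one edge and no universal vertex, are exactly: the empty set,
the open neighbourhoods in the complement of the vertices of degree at least 2,
and the complements of the free edges of `G`. -/
theorem stmt5 {V : Type*} [Fintype V] [DecidableEq V] (G : SimpleGraph V)
    [DecidableRel G.Adj]
    (hgirth : 5 ≤ G.egirth) (hcard : 4 ≤ Fintype.card V)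
    (hedge : ∃ v w : V, G.Adj v w)
    (huniv : ¬ ∃ v : V, ∀ w : V, w ≠ v → G.Adj v w) :
    {S : Set V | S = ∅ ∨ ∀ v ∈ S,
        numComponentsDel Gᶜ (S \ {v}) < numComponentsDel Gᶜ S}
      = {S : Set V | S = ∅
          ∨ (∃ v : V, 2 ≤ G.degree v ∧ S = Gᶜ.neighborSet v)
          ∨ (∃ v w : V, IsFreeEdge G v w ∧ S = ({v, w} : Set V)ᶜ)} :=
  stmt5_general G hgirth
end

section
/- Let G be a finite simple graph with girth at least 5. For distinct vertices v and w of G, the open neighbourhoods of v and w in the complement graph of G are equal if and only if {v,w} is a free edge of G (that is, {v,w} is an edge of G forming its own connected component). -/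
lemma no_triangle {V : Type*} (G : SimpleGraph V) (hgirth : 5 ≤ G.egirth)
    {a b c : V} (hab : G.Adj a b) (hbc : G.Adj b c) (hca : G.Adj c a) : False := by
  have hcyc : (SimpleGraph.Walk.cons hab (SimpleGraph.Walk.cons hbc
      (SimpleGraph.Walk.cons hca SimpleGraph.Walk.nil))).IsCycle := by
    rw [SimpleGraph.Walk.isCycle_def]
    refine ⟨?_, by simp, ?_⟩
    · rw [SimpleGraph.Walk.isTrail_def]
      simp only [SimpleGraph.Walk.edges_cons, SimpleGraph.Walk.edges_nil]
      have h1 : a ≠ c := fun h => G.irrefl (h ▸ hca)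
      have h2 : a ≠ b := hab.ne
      have h3 : b ≠ c := hbc.ne
      simp [Sym2.eq_iff, List.nodup_cons]
      aesop
    · simp only [SimpleGraph.Walk.support_cons, SimpleGraph.Walk.support_nil,
        List.tail_cons]
      have h1 : a ≠ c := fun h => G.irrefl (h ▸ hca)
      have h3 : b ≠ c := hbc.ne
      simp [List.nodup_cons]
      aesop
  have := SimpleGraph.le_egirth.mp hgirth a _ hcyc
  simp only [SimpleGraph.Walk.length_cons, SimpleGraph.Walk.length_nil] at this
  norm_num at this

/-- For a graph `G` of girth at least 5 and distinct vertices `v, w`, the open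
neighbourhoods of `v` and `w` in the complement of `G` coincide if and only if
`{v,w}` is a free edge of `G`. -/
theorem stmt6 {V : Type*} [Fintype V] (G : SimpleGraph V) (hgirth : 5 ≤ G.egirth)
    (v w : V) (hvw : v ≠ w) :
    Gᶜ.neighborSet v = Gᶜ.neighborSet w ↔ IsFreeEdge G v w := by
  constructor
  · intro h
    have key : ∀ u, (v ≠ u ∧ ¬ G.Adj v u) ↔ (w ≠ u ∧ ¬ G.Adj w u) := by
      intro u
      have := Set.ext_iff.mp h u
      simpa [SimpleGraph.neighborSet, SimpleGraph.compl_adj] using this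
    have hadj : G.Adj v w := by
      by_contra hne
      exact (key w).mp ⟨hvw, hne⟩ |>.1 rfl
    refine ⟨hadj, ?_, ?_⟩
    · ext u
      simp only [SimpleGraph.mem_neighborSet, Set.mem_singleton_iff]
      constructor
      · intro hu
        by_contra huw
        have hwu : ¬ G.Adj w u := fun hwu =>
          no_triangle G hgirth hadj hwu hu.symm
        exact ((key u).mpr ⟨Ne.symm huw ∘ Eq.symm ∘ Eq.symm, hwu⟩).2 hu
      · rintro rfl; exact hadj
    · ext u
      simp only [SimpleGraph.mem_neighborSet, Set.mem_singleton_iff]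
      constructor
      · intro hu
        by_contra huv
        have hvu : ¬ G.Adj v u := fun hvu =>
          no_triangle G hgirth hadj hu hvu.symm
        exact ((key u).mp ⟨fun h => huv h.symm, hvu⟩).2 hu
      · rintro rfl; exact hadj.symm
  · rintro ⟨hadj, hv, hw⟩
    ext u
    simp only [SimpleGraph.mem_neighborSet, SimpleGraph.compl_adj]
    have hv' := Set.ext_iff.mp hv u
    have hw' := Set.ext_iff.mp hw u
    simp only [SimpleGraph.mem_neighborSet, Set.mem_singleton_iff] at hv' hw'
    constructor
    · rintro ⟨hne, hnadj⟩
      refine ⟨?_, fun h => hnadj ?_⟩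
      · rintro rfl; exact hnadj hadj
      · have := hw'.mp h; subst this; exact absurd rfl hne
    · rintro ⟨hne, hnadj⟩
      refine ⟨?_, fun h => hnadj ?_⟩
      · rintro rfl; exact hnadj hadj.symm
      · have := hv'.mp h; subst this; exact absurd rfl hne
end
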